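/- A choice rule satisfies capacity-filling and the capacity-wise weaker axiom of revealed preference (CWrARP) if and only if it is responsive, i.e., there exists a single linear order ≻ on A such that for every (S,q), C(S,q) consists of the min{|S|,q} highest-≻ elements of S. -/

import Mathlib

open Finset

variable {α : Type*} [Fintype α] [DecidableEq α]

/-- The set of rejected alternatives `R(S,q) = S \ C(S,q)`. -/
def Rej (C : Finset α → ℕ → Finset α) (S : Finset α) (q : ℕ) : Finset α := S \ C S q

/-- A capacity-constrained choice rule chooses a subset of `S` of cardinality at most `q`. -/
def ValidRule (C : Finset α → ℕ → Finset α) : Prop :=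
  ∀ S : Finset α, ∀ q : ℕ, S.Nonempty → 1 ≤ q → q ≤ Fintype.card α →
    C S q ⊆ S ∧ (C S q).card ≤ q

/-- Capacity-filling: `|C(S,q)| = min {|S|, q}`. -/
def CapacityFilling (C : Finset α → ℕ → Finset α) : Prop :=
  ∀ S : Finset α, ∀ q : ℕ, S.Nonempty → 1 ≤ q → q ≤ Fintype.card α →
    (C S q).card = min S.card q

/-- Monotonicity: `C(S,q) ⊆ C(S,q+1)`. -/
def ChoiceMonotone (C : Finset α → ℕ → Finset α) : Prop :=
  ∀ S : Finset α, ∀ q : ℕ, S.Nonempty → 1 ≤ q → q < Fintype.card α →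
    C S q ⊆ C S (q + 1)

/-- Gross substitutes: if `a ∈ C(S,q)` then `a ∈ C(S \ {b}, q)` for `b ≠ a`. -/
def GrossSubstitutes (C : Finset α → ℕ → Finset α) : Prop :=
  ∀ S : Finset α, ∀ q : ℕ, ∀ a b : α, S.Nonempty → 1 ≤ q → q ≤ Fintype.card α →
    a ∈ S → b ∈ S → a ≠ b → a ∈ C S q → a ∈ C (S.erase b) q

/-- Irrelevance of accepted alternatives. -/
def IrrelevanceOfAcceptedAlternatives (C : Finset α → ℕ → Finset α) : Prop :=
  ∀ S S' : Finset α, ∀ q : ℕ, S.Nonempty → S'.Nonempty → 1 ≤ q → q < Fintype.card α →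
    Rej C S q = Rej C S' q →
    C S (q + 1) ∩ Rej C S q = C S' (q + 1) ∩ Rej C S' q

/-- `a` is revealed preferred to `b` at capacity `q`. -/
def RevealedPref (C : Finset α → ℕ → Finset α) (q : ℕ) (a b : α) : Prop :=
  ∃ S : Finset α, S.Nonempty ∧ a ∉ C S (q - 1) ∧ b ∉ C S (q - 1) ∧
    a ∈ C S q ∧ b ∈ Rej C S q

/-- Capacity-wise weak axiom of revealed preference. -/
def CWARP (C : Finset α → ℕ → Finset α) : Prop :=
  ∀ q : ℕ, 1 < q → q ≤ Fintype.card α →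
    ∀ a b : α, RevealedPref C q a b → ¬ RevealedPref C q b a

/-- Lexicographic choice: iteratively pick, for `i = 1, …, q`, the `π i`-maximal
remaining alternative of `S`, stopping when none remain. -/
def lexChoice (π : ℕ → LinearOrder α) (S : Finset α) : ℕ → Finset α
  | 0 => ∅
  | q + 1 =>
      let T := lexChoice π S q
      if h : (S \ T).Nonempty then insert (@Finset.max' α (π q) (S \ T) h) T else T

/-- `C` is (capacity-constrained) lexicographic for the priority profile `π`. -/
def IsLexFor (C : Finset α → ℕ → Finset α) (π : ℕ → LinearOrder α) : Prop :=
  ∀ S : Finset α, ∀ q : ℕ, S.Nonempty → 1 ≤ q → q ≤ Fintype.card α →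
    C S q = lexChoice π S q

/-- `C` is (capacity-constrained) lexicographic. -/
def IsLex (C : Finset α → ℕ → Finset α) : Prop :=
  ∃ π : ℕ → LinearOrder α, IsLexFor C π

/-- Capacity-wise weaker axiom of revealed preference. -/
def CWrARP (C : Finset α → ℕ → Finset α) : Prop :=
  ∀ S S' : Finset α, ∀ q q' : ℕ, S.Nonempty → S'.Nonempty →
    1 ≤ q → q ≤ Fintype.card α → 1 ≤ q' → q' ≤ Fintype.card α →
    ∀ a b : α, a ∈ S → a ∈ S' → b ∈ S → b ∈ S' →
      a ∈ C S q → b ∈ C S' q' → b ∉ C S q → a ∈ C S' q'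

/-- `C` is responsive: there is a single linear order such that `C(S,q)` consists of the
`min {|S|, q}` highest elements of `S`. -/
def IsResponsive (C : Finset α → ℕ → Finset α) : Prop :=
  ∃ r : LinearOrder α, ∀ S : Finset α, ∀ q : ℕ,
    S.Nonempty → 1 ≤ q → q ≤ Fintype.card α → C S q = lexChoice (fun _ => r) S q

set_option linter.unusedSectionVars false

lemma lexChoice_subset (π : ℕ → LinearOrder α) (S : Finset α) (q : ℕ) :
    lexChoice π S q ⊆ S := by
  induction q with
  | zero => simp [lexChoice]
  | succ q ih =>
    simp only [lexChoice]
    split_ifs with h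
    · intro x hx
      rcases mem_insert.mp hx with rfl | hx
      · exact (mem_sdiff.mp (@Finset.max'_mem α (π q) _ h)).1
      · exact ih hx
    · exact ih

lemma lexChoice_card (π : ℕ → LinearOrder α) (S : Finset α) (q : ℕ) :
    (lexChoice π S q).card = min S.card q := by
  induction q with
  | zero => simp [lexChoice]
  | succ q ih =>
    simp only [lexChoice]
    split_ifs with h
    · have hm := @Finset.max'_mem α (π q) _ h
      have hnm : @Finset.max' α (π q) _ h ∉ lexChoice π S q := (mem_sdiff.mp hm).2
      rw [card_insert_of_notMem hnm, ih]
      have hlt : (lexChoice π S q).card < S.card :=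
        card_lt_card (((ssubset_iff_of_subset (lexChoice_subset π S q)).mpr
          ⟨_, (mem_sdiff.mp hm).1, (mem_sdiff.mp hm).2⟩))
      omega
    · have hsub : S ⊆ lexChoice π S q := by
        intro x hx
        by_contra hxn
        exact h ⟨x, mem_sdiff.mpr ⟨hx, hxn⟩⟩
      have heq : lexChoice π S q = S := Subset.antisymm (lexChoice_subset π S q) hsub
      rw [heq] at ih ⊢
      omega

lemma lexChoice_upclosed (r : LinearOrder α) (S : Finset α) (q : ℕ)
    (a b : α) (hb : b ∈ lexChoice (fun _ => r) S q) (ha : a ∈ S) (hba : r.lt b a) :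
    a ∈ lexChoice (fun _ => r) S q := by
  letI := r
  induction q with
  | zero => simp [lexChoice] at hb
  | succ q ih =>
    simp only [lexChoice] at hb ⊢
    split_ifs at hb ⊢ with h
    · rcases mem_insert.mp hb with rfl | hb'
      · by_cases haT : a ∈ lexChoice (fun _ => r) S q
        · exact mem_insert_of_mem haT
        · have hle : a ≤ @Finset.max' α r _ h :=
            Finset.le_max' _ a (mem_sdiff.mpr ⟨ha, haT⟩)
          exact absurd hba (not_lt.mpr hle)
      · exact mem_insert_of_mem (ih hb')
    · exact ih hb

lemma upclosed_unique (r : LinearOrder α) (S T₁ T₂ : Finset α)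
    (h₁ : T₁ ⊆ S) (h₂ : T₂ ⊆ S) (hc : T₁.card = T₂.card)
    (u₁ : ∀ a b : α, b ∈ T₁ → a ∈ S → r.lt b a → a ∈ T₁)
    (u₂ : ∀ a b : α, b ∈ T₂ → a ∈ S → r.lt b a → a ∈ T₂) : T₁ = T₂ := by
  letI := r
  by_contra hne
  have hd1 : (T₁ \ T₂).Nonempty := by
    rw [sdiff_nonempty]
    intro hsub
    exact hne (eq_of_subset_of_card_le hsub (le_of_eq hc.symm))
  have hd2 : (T₂ \ T₁).Nonempty := by
    rw [sdiff_nonempty]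
    intro hsub
    exact hne (eq_of_subset_of_card_le hsub (le_of_eq hc)).symm
  obtain ⟨a, ha⟩ := hd1
  obtain ⟨b, hb⟩ := hd2
  rw [mem_sdiff] at ha hb
  rcases lt_trichotomy a b with hlt | rfl | hlt
  · exact hb.2 (u₁ b a ha.1 (h₂ hb.1) hlt)
  · exact hb.2 ha.1
  · exact ha.2 (u₂ a b hb.1 (h₁ ha.1) hlt)

theorem aux_main [Nonempty α]
    (C : Finset α → ℕ → Finset α)
    (hC : ∀ S : Finset α, ∀ q : ℕ, S.Nonempty → 1 ≤ q → q ≤ Fintype.card α →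
    C S q ⊆ S ∧ (C S q).card ≤ q) :
    ((∀ S : Finset α, ∀ q : ℕ, S.Nonempty → 1 ≤ q → q ≤ Fintype.card α →
    (C S q).card = min S.card q) ∧
    (∀ S S' : Finset α, ∀ q q' : ℕ, S.Nonempty → S'.Nonempty →
    1 ≤ q → q ≤ Fintype.card α → 1 ≤ q' → q' ≤ Fintype.card α →
    ∀ a b : α, a ∈ S → a ∈ S' → b ∈ S → b ∈ S' →
      a ∈ C S q → b ∈ C S' q' → b ∉ C S q → a ∈ C S' q')) ↔
    (∃ r : LinearOrder α, ∀ S : Finset α, ∀ q : ℕ,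
    S.Nonempty → 1 ≤ q → q ≤ Fintype.card α → C S q = lexChoice (fun _ => r) S q) := by
  have hcard1 : (1:ℕ) ≤ Fintype.card α := Fintype.card_pos
  constructor
  · rintro ⟨hCF, hW⟩
    have key : ∀ S : Finset α, ∀ q : ℕ, ∀ a b : α, S.Nonempty → 1 ≤ q →
        q ≤ Fintype.card α → a ∈ C S q → b ∈ S → b ∉ C S q →
        a ∈ C ({a, b} : Finset α) 1 := by
      intro S q a b hS hq hqc haC hbS hbC
      have haS : a ∈ S := (hC S q hS hq hqc).1 haC
      have hpne : ({a, b} : Finset α).Nonempty := ⟨a, by simp⟩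
      have hcard : (C {a, b} 1).card = 1 := by
        rw [hCF _ 1 hpne le_rfl hcard1]
        have h1 : 1 ≤ ({a, b} : Finset α).card := card_pos.mpr hpne
        omega
      obtain ⟨x, hx⟩ := card_eq_one.mp hcard
      have hxmem : x ∈ ({a, b} : Finset α) := (hC _ 1 hpne le_rfl hcard1).1
        (by rw [hx]; exact mem_singleton_self x)
      rcases mem_insert.mp hxmem with rfl | hxb
      · rw [hx]; exact mem_singleton_self x
      · rw [mem_singleton] at hxb; subst hxb
        exact hW S {a, x} q 1 hS hpne hq hqc le_rfl hcard1 a x haS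
          (by simp) hbS (by simp)
          haC (by rw [hx]; exact mem_singleton_self x) hbC
    have pairu : ∀ a b : α, ∀ x ∈ C ({a, b} : Finset α) 1,
        ∀ y ∈ C ({a, b} : Finset α) 1, x = y := by
      intro a b x hx y hy
      exact card_le_one.mp (hC {a, b} 1 ⟨a, by simp⟩ le_rfl hcard1).2 x hx y hy
    have pairt : ∀ a b : α, a ∈ C ({a, b} : Finset α) 1 ∨ b ∈ C ({a, b} : Finset α) 1 := by
      intro a b
      have hpne : ({a, b} : Finset α).Nonempty := ⟨a, by simp⟩
      have hcard : (C {a, b} 1).card = 1 := by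
        rw [hCF _ 1 hpne le_rfl hcard1]
        have h1 : 1 ≤ ({a, b} : Finset α).card := card_pos.mpr hpne
        omega
      obtain ⟨x, hx⟩ := card_pos.mp (by omega : 0 < (C ({a, b} : Finset α) 1).card)
      have hxmem : x ∈ ({a, b} : Finset α) := (hC _ 1 hpne le_rfl hcard1).1 hx
      rcases mem_insert.mp hxmem with rfl | hxb
      · exact Or.inl hx
      · rw [mem_singleton] at hxb; subst hxb; exact Or.inr hx
    letI r : LinearOrder α := {
      le := fun a b => a = b ∨ b ∈ C ({a, b} : Finset α) 1
      le_refl := fun a => Or.inl rfl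
      le_trans := by
        intro a b c hab hbc
        rcases hab with rfl | hab
        · exact hbc
        rcases hbc with rfl | hbc
        · exact Or.inr hab
        by_cases hac : a = c
        · exact Or.inl hac
        by_cases h1 : a = b
        · subst h1; exact Or.inr hbc
        by_cases h2 : b = c
        · subst h2; exact Or.inr hab
        right
        have hne : ({a, b, c} : Finset α).Nonempty := ⟨a, by simp⟩
        have hcard : (C ({a, b, c} : Finset α) 1).card = 1 := by
          rw [hCF _ 1 hne le_rfl hcard1]
          have h3 : 1 ≤ ({a, b, c} : Finset α).card := card_pos.mpr hne
          omega
        obtain ⟨x, hx⟩ := card_pos.mp (by omega : 0 < (C ({a, b, c} : Finset α) 1).card)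
        have hxmem : x ∈ ({a, b, c} : Finset α) := (hC _ 1 hne le_rfl hcard1).1 hx
        simp only [mem_insert, mem_singleton] at hxmem
        rcases hxmem with rfl | rfl | rfl
        · -- x = a chosen, b rejected : a beats b, contradiction
          have hbr : b ∉ C ({x, b, c} : Finset α) 1 := by
            intro hb
            exact h1 (card_le_one.mp (hC _ 1 hne le_rfl hcard1).2 x hx b hb)
          have := key ({x, b, c} : Finset α) 1 x b hne le_rfl hcard1 hx (by simp) hbr
          exact absurd (pairu x b x this b hab) h1
        · have hcr : c ∉ C ({a, x, c} : Finset α) 1 := by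
            intro hcm
            exact h2 (card_le_one.mp (hC _ 1 hne le_rfl hcard1).2 x hx c hcm)
          have := key ({a, x, c} : Finset α) 1 x c hne le_rfl hcard1 hx (by simp) hcr
          exact absurd (pairu x c x this c hbc) h2
        · have har : a ∉ C ({a, b, x} : Finset α) 1 := by
            intro ham
            exact hac ((card_le_one.mp (hC _ 1 hne le_rfl hcard1).2 x hx a ham)).symm
          have := key ({a, b, x} : Finset α) 1 x a hne le_rfl hcard1 hx (by simp) har
          rwa [pair_comm x a] at this
      le_antisymm := by
        intro a b hab hba
        rcases hab with rfl | hab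
        · rfl
        rcases hba with rfl | hba
        · rfl
        rw [pair_comm b a] at hba
        exact pairu a b a hba b hab
      le_total := by
        intro a b
        by_cases h : a = b
        · exact Or.inl (Or.inl h)
        rcases pairt a b with ha | hb
        · right; right; rw [pair_comm b a]; exact ha
        · exact Or.inl (Or.inr hb)
      toDecidableLE := Classical.decRel _ }
    refine ⟨r, ?_⟩
    intro S q hS hq hqc
    apply upclosed_unique r S
    · exact (hC S q hS hq hqc).1
    · exact lexChoice_subset _ S q
    · rw [hCF S q hS hq hqc, lexChoice_card]
    · intro x y hyC hxS hyx
      by_contra hxC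
      have h1 : y ∈ C ({y, x} : Finset α) 1 := key S q y x hS hq hqc hyC hxS hxC
      obtain ⟨hle, hnle⟩ := lt_iff_le_not_ge.mp hyx
      have h2 : x ∈ C ({y, x} : Finset α) 1 := by
        rcases (hle : y = x ∨ x ∈ C ({y, x} : Finset α) 1) with rfl | hx2
        · exact absurd (le_refl y) hnle
        · exact hx2
      exact ne_of_lt hyx (pairu y x y h1 x h2)
    · intro a b hb ha hba
      exact lexChoice_upclosed r S q a b hb ha hba
  · rintro ⟨r, hr⟩
    letI := r
    constructor
    · intro S q hS hq hqc
      rw [hr S q hS hq hqc, lexChoice_card]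
    · intro S S' q q' hS hS' hq hqc hq' hq'c a b haS haS' hbS hbS' haC hbC' hbC
      rw [hr S q hS hq hqc] at haC hbC
      rw [hr S' q' hS' hq' hq'c] at hbC' ⊢
      have hba : r.lt b a := by
        rcases lt_trichotomy a b with h | h | h
        · exact absurd (lexChoice_upclosed r S q b a haC hbS h) hbC
        · exact absurd (h ▸ haC) hbC
        · exact h
      exact lexChoice_upclosed r S' q' a b hbC' haS' hba

theorem responsive_iff_capacityFilling_cwrarp [Nonempty α]
    (C : Finset α → ℕ → Finset α) (hC : ValidRule C) :
    (CapacityFilling C ∧ CWrARP C) ↔ IsResponsive C :=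
  aux_main C hC
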